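/- arXiv:math/0203252 — 2 statements merged into one kernel-verified Lean document; each statement's English description precedes it below -/
import Mathlib

section
/- The fixed point of the squared silver mean substitution is not eventually periodic: there is no p ≥ 1 and N such that the infinite word w satisfies w(n+p) = w(n) for all n ≥ N. -/
/-!
If the word were eventually periodic with period `p`, the number of `B`s among its first `m`
letters would be `c m / p + O(1)` for some integer `c`. Along the prefixes `σⁿ(R)` this makes
`dₙ = p·#_B σⁿ(R) - c·|σⁿ(R)|` a bounded integer solution of the Pell recurrence
`dₙ₊₂ = 2dₙ₊₁ + dₙ`, hence two consecutive terms vanish. But the Casoratian of the sequences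
`#_B σⁿ(R)` and `|σⁿ(R)|` is `±1`, so two consecutive zeros force `p = 0`.
-/

/-- The silver mean substitution `B ↦ R`, `R ↦ RBR` (letters: `false = B`, `true = R`). -/
def silverSubst : Bool → List Bool
  | false => [true]
  | true => [true, false, true]

/-- The iterated substitution word `σⁿ(R)`. -/
def silverWord : ℕ → List Bool
  | 0 => [true]
  | n + 1 => (silverWord n).flatMap silverSubst

open Finset

theorem exists_abs_le_of_eventually_periodic {α : Type*} [AddCommGroup α] [LinearOrder α]
    [IsOrderedAddMonoid α] {f : ℕ → α} {p N : ℕ} (hp : 0 < p)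
    (h : ∀ n ≥ N, f (n + p) = f n) : ∃ C, ∀ n, |f n| ≤ C := by
  refine ⟨∑ i ∈ range (N + p), |f i|, fun n => ?_⟩
  induction n using Nat.strong_induction_on with
  | _ n ih =>
    by_cases hn : n < N + p
    · exact single_le_sum (fun i _ => abs_nonneg (f i)) (mem_range.mpr hn)
    · obtain ⟨m, rfl⟩ : ∃ m, n = m + p := ⟨n - p, by omega⟩
      rw [h m (by omega)]
      exact ih m (by omega)

namespace Nat

theorem count_add_period_add_count {P : ℕ → Prop} [DecidablePred P] {p N : ℕ}
    (h : ∀ n ≥ N, P (n + p) ↔ P n) {m : ℕ} (hm : N ≤ m) :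
    count P (m + p) + count P N = count P m + count P (N + p) := by
  induction m, hm using Nat.le_induction with
  | base => omega
  | succ m hm ih =>
    rw [show m + 1 + p = m + p + 1 by omega, count_succ, count_succ]
    simp only [h m hm]
    omega

theorem exists_abs_mul_count_sub_le {P : ℕ → Prop} [DecidablePred P] {p N : ℕ} (hp : 0 < p)
    (h : ∀ n ≥ N, P (n + p) ↔ P n) :
    ∃ c C : ℤ, ∀ m, |p * (count P m : ℤ) - c * m| ≤ C := by
  refine ⟨count P (N + p) - count P N, exists_abs_le_of_eventually_periodic (N := N) hp
    fun m hm => ?_⟩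
  have hstep : (count P (m + p) + count P N : ℤ) = count P m + count P (N + p) := by
    exact_mod_cast count_add_period_add_count h hm
  push_cast
  linear_combination (p : ℤ) * hstep

theorem count_eq_list_count {α : Type*} [DecidableEq α] (t : List α) {w : ℕ → α} {d : α}
    (h : ∀ i < t.length, w i = t.getD i d) (a : α) :
    count (fun i => w i = a) t.length = t.count a := by
  induction t generalizing w with
  | nil => simp
  | cons b t ih =>
    have hb : w 0 = b := by simpa using h 0 (by simp)
    rw [List.length_cons, count_succ', List.count_cons,
      ih (w := fun i => w (i + 1)) fun i hi => by simpa using h (i + 1) (by simpa using hi)]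
    simp [hb]

end Nat

def SatisfiesPellRecurrence (d : ℕ → ℤ) : Prop :=
  ∀ n, d (n + 2) = 2 * d (n + 1) + d n

namespace SatisfiesPellRecurrence

variable {x y d : ℕ → ℤ}

theorem casoratian_eq (hx : SatisfiesPellRecurrence x) (hy : SatisfiesPellRecurrence y) (n : ℕ) :
    x n * y (n + 1) - x (n + 1) * y n = (-1) ^ n * (x 0 * y 1 - x 1 * y 0) := by
  induction n with
  | zero => ring
  | succ n ih =>
    rw [hx n, hy n, pow_succ]
    linear_combination -ih

/-- The induction is on the bound: if `|d (k + 1)| = C + 1` then the recurrence forces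
`d k = -(C + 1)` and `d (k + 3) = 3 (C + 1)`, so otherwise the shifted sequence is bounded by `C`. -/
theorem exists_eq_zero_and_eq_zero_of_abs_le (hd : SatisfiesPellRecurrence d) {C : ℤ}
    (hC : ∀ n, |d n| ≤ C) : ∃ n, d n = 0 ∧ d (n + 1) = 0 := by
  lift C to ℕ using (abs_nonneg _).trans (hC 0)
  induction C generalizing d with
  | zero => exact ⟨0, abs_nonpos_iff.mp (hC 0), abs_nonpos_iff.mp (hC 1)⟩
  | succ C ih =>
    by_cases hmax : ∃ k, |d (k + 1)| = C + 1
    · exfalso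
      obtain ⟨k, hk⟩ := hmax
      have h₀ := abs_le.mp (hC k)
      have h₂ := abs_le.mp (hC (k + 2))
      have h₃ := abs_le.mp (hC (k + 3))
      push_cast at h₀ h₂ h₃
      have hrec₂ := hd k
      have hrec₃ := hd (k + 1)
      rcases abs_eq (by positivity : (0 : ℤ) ≤ C + 1) |>.mp hk with h₁ | h₁ <;> linarith
    · simp only [not_exists] at hmax
      obtain ⟨n, h₀, h₁⟩ := ih (d := fun n => d (n + 1)) (fun n => hd (n + 1)) fun n =>
        Int.lt_add_one_iff.mp <| lt_of_le_of_ne (by exact_mod_cast hC (n + 1)) (hmax n)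
      exact ⟨n + 1, h₀, h₁⟩

end SatisfiesPellRecurrence

theorem count_true_flatMap_silverSubst (t : List Bool) :
    (t.flatMap silverSubst).count true = 2 * t.count true + t.count false := by
  induction t with
  | nil => simp
  | cons a t ih => cases a <;> simp [silverSubst, ih] <;> ring

theorem count_false_flatMap_silverSubst (t : List Bool) :
    (t.flatMap silverSubst).count false = t.count true := by
  induction t with
  | nil => simp
  | cons a t ih => cases a <;> simp [silverSubst, ih]

theorem satisfiesPellRecurrence_count_false_silverWord :
    SatisfiesPellRecurrence fun n => ((silverWord n).count false : ℤ) := by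
  intro n
  simp only [silverWord, count_false_flatMap_silverSubst, count_true_flatMap_silverSubst]
  push_cast
  ring

theorem satisfiesPellRecurrence_length_silverWord :
    SatisfiesPellRecurrence fun n => ((silverWord n).length : ℤ) := by
  intro n
  simp only [← List.count_true_add_count_false, silverWord, count_false_flatMap_silverSubst,
    count_true_flatMap_silverSubst]
  push_cast
  ring

theorem count_false_mul_length_silverWord_sub (n : ℕ) :
    ((silverWord n).count false : ℤ) * (silverWord (n + 1)).length -
      (silverWord (n + 1)).count false * (silverWord n).length = (-1) ^ (n + 1) := by
  rw [satisfiesPellRecurrence_count_false_silverWord.casoratian_eq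
    satisfiesPellRecurrence_length_silverWord n]
  simp [silverWord, silverSubst, pow_succ]

/-- The infinite fixed point word of the silver mean substitution (the limit of the
`σⁿ(R)`, of which each `σⁿ(R)` is a prefix) is not eventually periodic. -/
theorem silver_fixed_point_not_eventually_periodic (w : ℕ → Bool)
    (hw : ∀ n i, i < (silverWord n).length → w i = (silverWord n).getD i false) :
    ¬ ∃ p : ℕ, 1 ≤ p ∧ ∃ N : ℕ, ∀ n ≥ N, w (n + p) = w n := by
  rintro ⟨p, hp, N, hper⟩
  obtain ⟨c, C, hC⟩ := Nat.exists_abs_mul_count_sub_le (P := fun i => w i = false) hp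
    fun n hn => by rw [hper n hn]
  set d : ℕ → ℤ := fun n => p * (silverWord n).count false - c * (silverWord n).length
    with hd_def
  have hd : SatisfiesPellRecurrence d := fun n => by
    linear_combination (p : ℤ) * satisfiesPellRecurrence_count_false_silverWord n -
      c * satisfiesPellRecurrence_length_silverWord n
  obtain ⟨n, h₀, h₁⟩ := hd.exists_eq_zero_and_eq_zero_of_abs_le fun n => by
    simpa [Nat.count_eq_list_count _ (hw n)] using hC (silverWord n).length
  simp only [hd_def] at h₀ h₁
  have hp0 : (p : ℤ) * (-1) ^ (n + 1) = 0 := by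
    linear_combination ((silverWord (n + 1)).length : ℤ) * h₀ - ((silverWord n).length : ℤ) * h₁ -
      (p : ℤ) * count_false_mul_length_silverWord_sub n
  have : (p : ℤ) = 0 := by simpa using hp0
  omega
end

section
/- The map sending (u₁,u₂,u₃,u₄) ∈ ℤ⁴ to (u₁a₁+u₂a₂+u₃a₃+u₄a₄, u₁a₁*+u₂a₂*+u₃a₃*+u₄a₄*) ∈ ℝ⁴, where aₖ = (cos((k-1)π/4), sin((k-1)π/4)) and aₖ* = (cos(3(k-1)π/4), sin(3(k-1)π/4)), is injective with discrete image, i.e., its image is a lattice of rank 4 in ℝ⁴. -/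
open Real

/-- The unit vector at angle `k·45°`. -/
noncomputable def abVec (k : Fin 4) : ℝ × ℝ :=
  (Real.cos ((k : ℕ) * (Real.pi / 4)), Real.sin ((k : ℕ) * (Real.pi / 4)))

/-- The unit vector at angle `k·135°` (the star-map image of `abVec k`). -/
noncomputable def abVecStar (k : Fin 4) : ℝ × ℝ :=
  (Real.cos ((k : ℕ) * (3 * Real.pi / 4)), Real.sin ((k : ℕ) * (3 * Real.pi / 4)))

/-- The combined map `ℤ⁴ → ℝ² × ℝ²`, `u ↦ (∑ uₖ aₖ, ∑ uₖ aₖ*)`. -/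
noncomputable def abEmbed (u : Fin 4 → ℤ) : (ℝ × ℝ) × (ℝ × ℝ) :=
  (∑ k : Fin 4, (u k : ℝ) • abVec k, ∑ k : Fin 4, (u k : ℝ) • abVecStar k)

section aux

private lemma ab_c2 : Real.cos ((2:ℝ) * (Real.pi/4)) = 0 := by
  rw [show (2:ℝ)*(Real.pi/4) = Real.pi/2 by ring, Real.cos_pi_div_two]
private lemma ab_s2 : Real.sin ((2:ℝ) * (Real.pi/4)) = 1 := by
  rw [show (2:ℝ)*(Real.pi/4) = Real.pi/2 by ring, Real.sin_pi_div_two]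
private lemma ab_c3 : Real.cos ((3:ℝ) * (Real.pi/4)) = -(Real.sqrt 2/2) := by
  rw [show (3:ℝ)*(Real.pi/4) = Real.pi - Real.pi/4 by ring, Real.cos_pi_sub,
    Real.cos_pi_div_four]
private lemma ab_s3 : Real.sin ((3:ℝ) * (Real.pi/4)) = Real.sqrt 2/2 := by
  rw [show (3:ℝ)*(Real.pi/4) = Real.pi - Real.pi/4 by ring, Real.sin_pi_sub,
    Real.sin_pi_div_four]
private lemma ab_cs1 : Real.cos ((1:ℝ) * (3*Real.pi/4)) = -(Real.sqrt 2/2) := by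
  rw [show (1:ℝ)*(3*Real.pi/4) = Real.pi - Real.pi/4 by ring, Real.cos_pi_sub,
    Real.cos_pi_div_four]
private lemma ab_ss1 : Real.sin ((1:ℝ) * (3*Real.pi/4)) = Real.sqrt 2/2 := by
  rw [show (1:ℝ)*(3*Real.pi/4) = Real.pi - Real.pi/4 by ring, Real.sin_pi_sub,
    Real.sin_pi_div_four]
private lemma ab_cs2 : Real.cos ((2:ℝ) * (3*Real.pi/4)) = 0 := by
  rw [show (2:ℝ)*(3*Real.pi/4) = Real.pi + Real.pi/2 by ring, Real.cos_add]
  simp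
private lemma ab_ss2 : Real.sin ((2:ℝ) * (3*Real.pi/4)) = -1 := by
  rw [show (2:ℝ)*(3*Real.pi/4) = Real.pi + Real.pi/2 by ring, Real.sin_add]
  simp
private lemma ab_cs3 : Real.cos ((3:ℝ) * (3*Real.pi/4)) = Real.sqrt 2/2 := by
  rw [show (3:ℝ)*(3*Real.pi/4) = Real.pi/4 + 2*Real.pi by ring, Real.cos_add_two_pi,
    Real.cos_pi_div_four]
private lemma ab_ss3 : Real.sin ((3:ℝ) * (3*Real.pi/4)) = Real.sqrt 2/2 := by
  rw [show (3:ℝ)*(3*Real.pi/4) = Real.pi/4 + 2*Real.pi by ring, Real.sin_add_two_pi,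
    Real.sin_pi_div_four]

/-- Explicit formula for `abEmbed`. -/
lemma abEmbed_eval (u : Fin 4 → ℤ) :
    abEmbed u =
      (((u 0 : ℝ) + Real.sqrt 2/2 * ((u 1 : ℝ) - (u 3 : ℝ)),
        (u 2 : ℝ) + Real.sqrt 2/2 * ((u 1 : ℝ) + (u 3 : ℝ))),
       ((u 0 : ℝ) - Real.sqrt 2/2 * ((u 1 : ℝ) - (u 3 : ℝ)),
        -(u 2 : ℝ) + Real.sqrt 2/2 * ((u 1 : ℝ) + (u 3 : ℝ)))) := by
  simp only [abEmbed, abVec, abVecStar, Fin.sum_univ_four,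
    show ((0:Fin 4):ℕ) = 0 from rfl, show ((1:Fin 4):ℕ) = 1 from rfl,
    show ((2:Fin 4):ℕ) = 2 from rfl, show ((3:Fin 4):ℕ) = 3 from rfl,
    Nat.cast_zero, Nat.cast_one, Nat.cast_ofNat,
    Prod.smul_mk, Prod.mk_add_mk, smul_eq_mul, Prod.mk.injEq]
  rw [ab_c2, ab_s2, ab_c3, ab_s3, ab_cs1, ab_ss1, ab_cs2, ab_ss2, ab_cs3, ab_ss3]
  simp only [one_mul, zero_mul, Real.cos_zero, Real.sin_zero, Real.cos_pi_div_four,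
    Real.sin_pi_div_four, mul_one, mul_zero]
  refine ⟨⟨by ring, by ring⟩, by ring, by ring⟩

private lemma ab_half_key {X Y : ℝ} (h : 1 ≤ |X + Y|) : 1/2 ≤ |X| ∨ 1/2 ≤ |Y| := by
  rcases le_total (1/2 : ℝ) |X| with hc | hc
  · exact Or.inl hc
  · right
    have := abs_add_le X Y
    linarith
private lemma ab_int_abs {a b : ℤ} (h : a ≠ b) : (1:ℝ) ≤ |(a:ℝ) - (b:ℝ)| := by
  have : (1:ℝ) ≤ |((a - b : ℤ) : ℝ)| := by
    rw [← Int.cast_abs]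
    exact_mod_cast Int.one_le_abs (by omega)
  push_cast at this
  linarith
private lemma ab_sqrt2_abs {d : ℝ} (h : 1 ≤ |d|) : 1 ≤ |Real.sqrt 2 * d| := by
  have hs2 : (1:ℝ) ≤ Real.sqrt 2 := by
    rw [show (1:ℝ) = Real.sqrt 1 by simp]
    exact Real.sqrt_le_sqrt (by norm_num)
  rw [abs_mul, abs_of_nonneg (by positivity : (0:ℝ) ≤ Real.sqrt 2)]
  nlinarith

/-- distinct images of `abEmbed` are uniformly separated. -/
lemma abEmbed_sep {u v : Fin 4 → ℤ} (h : u ≠ v) :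
    (1/2 : ℝ) ≤ dist (abEmbed u) (abEmbed v) := by
  rw [abEmbed_eval, abEmbed_eval, Prod.dist_eq, Prod.dist_eq, Prod.dist_eq]
  simp only [Real.dist_eq]
  rw [le_max_iff, le_max_iff, le_max_iff]
  set X1 : ℝ := ((u 0 : ℝ) + Real.sqrt 2/2 * ((u 1 : ℝ) - (u 3 : ℝ))) -
      ((v 0 : ℝ) + Real.sqrt 2/2 * ((v 1 : ℝ) - (v 3 : ℝ))) with hX1
  set Y1 : ℝ := ((u 2 : ℝ) + Real.sqrt 2/2 * ((u 1 : ℝ) + (u 3 : ℝ))) -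
      ((v 2 : ℝ) + Real.sqrt 2/2 * ((v 1 : ℝ) + (v 3 : ℝ))) with hY1
  set X2 : ℝ := ((u 0 : ℝ) - Real.sqrt 2/2 * ((u 1 : ℝ) - (u 3 : ℝ))) -
      ((v 0 : ℝ) - Real.sqrt 2/2 * ((v 1 : ℝ) - (v 3 : ℝ))) with hX2
  set Y2 : ℝ := (-(u 2 : ℝ) + Real.sqrt 2/2 * ((u 1 : ℝ) + (u 3 : ℝ))) -
      (-(v 2 : ℝ) + Real.sqrt 2/2 * ((v 1 : ℝ) + (v 3 : ℝ))) with hY2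
  by_cases h0 : u 0 = v 0
  · by_cases h2 : u 2 = v 2
    · by_cases hm : u 1 - u 3 = v 1 - v 3
      · by_cases hp : u 1 + u 3 = v 1 + v 3
        · refine absurd (funext fun k => ?_) h
          have e1 : u 1 = v 1 := by omega
          have e3 : u 3 = v 3 := by omega
          fin_cases k <;> first | exact h0 | exact e1 | exact h2 | exact e3
        · -- Y1 + Y2 = √2 * Δ(u1+u3)
          have hd : (1:ℝ) ≤ |((u 1 + u 3 : ℤ) : ℝ) - ((v 1 + v 3 : ℤ) : ℝ)| :=
            ab_int_abs hp
          push_cast at hd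
          have hsum : Y1 + Y2 = Real.sqrt 2 * (((u 1:ℝ) + u 3) - ((v 1:ℝ) + v 3)) := by
            rw [hY1, hY2]; ring
          have := ab_half_key (X := Y1) (Y := Y2)
            (by rw [hsum]; exact ab_sqrt2_abs (by linarith [hd]))
          tauto
      · -- X1 + (-X2) = √2 * Δ(u1-u3)
        have hd : (1:ℝ) ≤ |((u 1 - u 3 : ℤ) : ℝ) - ((v 1 - v 3 : ℤ) : ℝ)| :=
          ab_int_abs hm
        push_cast at hd
        have hsum : X1 + (-X2) = Real.sqrt 2 * (((u 1:ℝ) - u 3) - ((v 1:ℝ) - v 3)) := by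
          rw [hX1, hX2]; ring
        have := ab_half_key (X := X1) (Y := -X2)
          (by rw [hsum]; exact ab_sqrt2_abs (by linarith [hd]))
        rw [abs_neg] at this
        tauto
    · -- Y1 + (-Y2) = 2 * Δ(u2)
      have hd : (1:ℝ) ≤ |(u 2 : ℝ) - (v 2 : ℝ)| := ab_int_abs h2
      have hsum : Y1 + (-Y2) = 2 * ((u 2:ℝ) - (v 2:ℝ)) := by
        rw [hY1, hY2]; ring
      have h1 : (1:ℝ) ≤ |Y1 + (-Y2)| := by
        rw [hsum, abs_mul]
        rw [abs_of_nonneg (by norm_num : (0:ℝ) ≤ (2:ℝ))]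
        linarith
      have := ab_half_key h1
      rw [abs_neg] at this
      tauto
  · -- X1 + X2 = 2 * Δ(u0)
    have hd : (1:ℝ) ≤ |(u 0 : ℝ) - (v 0 : ℝ)| := ab_int_abs h0
    have hsum : X1 + X2 = 2 * ((u 0:ℝ) - (v 0:ℝ)) := by
      rw [hX1, hX2]; ring
    have h1 : (1:ℝ) ≤ |X1 + X2| := by
      rw [hsum, abs_mul, abs_of_nonneg (by norm_num : (0:ℝ) ≤ (2:ℝ))]
      linarith
    have := ab_half_key h1
    tauto

end aux

/-- The map `u ↦ (∑ uₖ aₖ, ∑ uₖ aₖ*)` is injective and has discrete image (no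
accumulation points), i.e., its image is a lattice of rank 4 in `ℝ⁴`. -/
theorem abEmbed_injective_discrete :
    Function.Injective abEmbed ∧
      ∀ x : (ℝ × ℝ) × (ℝ × ℝ), ¬ AccPt x (Filter.principal (Set.range abEmbed)) := by
  constructor
  · intro u v h
    by_contra hne
    have := abEmbed_sep hne
    rw [h, dist_self] at this
    linarith
  · intro x hx
    rw [accPt_iff_nhds] at hx
    obtain ⟨y, ⟨hyU, u, rfl⟩, hyx⟩ :=
      hx (Metric.ball x (1/4)) (Metric.ball_mem_nhds x (by norm_num))
    have hdy : 0 < dist (abEmbed u) x := dist_pos.mpr hyx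
    obtain ⟨z, ⟨hzU, v, rfl⟩, hzx⟩ :=
      hx (Metric.ball x (min (1/4) (dist (abEmbed u) x)))
        (Metric.ball_mem_nhds x (by positivity))
    rw [Metric.mem_ball] at hyU hzU
    have hz4 : dist (abEmbed v) x < 1/4 := lt_of_lt_of_le hzU (min_le_left _ _)
    have hzy : dist (abEmbed v) x < dist (abEmbed u) x :=
      lt_of_lt_of_le hzU (min_le_right _ _)
    have huv : u ≠ v := by
      intro hE
      rw [hE] at hzy
      exact lt_irrefl _ hzy
    have hsep := abEmbed_sep huv
    have htri : dist (abEmbed u) (abEmbed v) ≤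
        dist (abEmbed u) x + dist x (abEmbed v) := dist_triangle _ _ _
    rw [dist_comm x (abEmbed v)] at htri
    linarith
end
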